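/- arXiv:2105.12956 — 4 statements merged into one kernel-verified Lean document; each statement's English description precedes it below -/
import Mathlib

section
/- For any fixed positive integer r and real X ≥ 2, the sum over natural numbers x ≤ X of τ(x)^r is O(X (log X)^{2^r - 1}), where τ is the number-of-divisors function. -/
/-!
The divisor function is submultiplicative, so for every completely multiplicative weight
`w ≥ 0`, `τ(n)^(r+1) w(n) = ∑_{dm=n} τ(n)^r w(n) ≤ ∑_{dm=n} τ(d)^r w(d) τ(m)^r w(m)`, a Dirichlet
convolution. Summing over `n ≤ N` with `∑_{n≤N} (f∗g)(n) = ∑_{d≤N} f(d) ∑_{m≤N/d} g(m)` turns a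
bound for the sums of `τ^r w` into one for `τ^(r+1) w`. Induction on `r` with `w(n) = 1/n`,
starting from the harmonic sum, gives `∑_{n≤N} τ(n)^r / n ≪ (1 + log N)^(2^r)`; with `w = 1`
the inner sum contributes `N/d`, which brings in the former sum and gives
`∑_{n≤N} τ(n)^r ≪ N (1 + log N)^(2^r - 1)`.
-/

open Finset Real ArithmeticFunction
open scoped ArithmeticFunction.zeta

theorem Nat.card_divisors_mul_le (m n : ℕ) : #(m * n).divisors ≤ #m.divisors * #n.divisors := by
  rw [Nat.divisors_mul]
  exact card_mul_le

theorem Nat.card_divisorsAntidiagonal (n : ℕ) : #n.divisorsAntidiagonal = #n.divisors := by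
  rw [← Nat.map_div_right_divisors, card_map]

theorem Real.log_natCast_div_le (N d : ℕ) : Real.log ↑(N / d) ≤ Real.log N := by
  rcases Nat.eq_zero_or_pos (N / d) with h | h
  · simpa [h] using log_natCast_nonneg N
  · exact log_le_log (by exact_mod_cast h) (by exact_mod_cast Nat.div_le_self N d)

theorem sum_Ioc_inv_eq_harmonic (N : ℕ) : ∑ n ∈ Ioc 0 N, (n : ℝ)⁻¹ = harmonic N := by
  rw [harmonic_eq_sum_Icc, ← Icc_add_one_left_eq_Ioc]
  push_cast
  rfl

namespace ArithmeticFunction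

def cardDivisorsPowMul (r : ℕ) (w : ArithmeticFunction ℝ) : ArithmeticFunction ℝ :=
  ⟨fun n => (#n.divisors : ℝ) ^ r * w n, by simp⟩

@[simp]
theorem cardDivisorsPowMul_apply (r : ℕ) (w : ArithmeticFunction ℝ) (n : ℕ) :
    cardDivisorsPowMul r w n = (#n.divisors : ℝ) ^ r * w n :=
  rfl

noncomputable def natInv : ArithmeticFunction ℝ :=
  ⟨fun n => (n : ℝ)⁻¹, by simp⟩

@[simp]
theorem natInv_apply (n : ℕ) : natInv n = (n : ℝ)⁻¹ :=
  rfl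

theorem natInv_mul (m n : ℕ) : natInv (m * n) = natInv m * natInv n := by
  simp only [natInv_apply, Nat.cast_mul, mul_inv]

theorem natInv_nonneg (n : ℕ) : 0 ≤ natInv n := by
  simp

theorem natCoe_zeta_mul (m n : ℕ) : (ζ : ArithmeticFunction ℝ) (m * n) = ζ m * ζ n := by
  simp only [natCoe_apply, zeta_apply, mul_eq_zero]
  split_ifs <;> simp_all

theorem natCoe_zeta_nonneg (n : ℕ) : 0 ≤ (ζ : ArithmeticFunction ℝ) n := by
  rw [natCoe_apply]
  positivity

theorem cardDivisorsPowMul_zeta_apply (r : ℕ) {n : ℕ} (hn : n ≠ 0) :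
    cardDivisorsPowMul r ζ n = (#n.divisors : ℝ) ^ r := by
  rw [cardDivisorsPowMul_apply, natCoe_apply, zeta_apply_ne hn, Nat.cast_one, mul_one]

section CompletelyMultiplicative

variable {w : ArithmeticFunction ℝ} (hw₀ : ∀ n, 0 ≤ w n)
include hw₀

theorem cardDivisorsPowMul_nonneg (r n : ℕ) : 0 ≤ cardDivisorsPowMul r w n :=
  mul_nonneg (by positivity) (hw₀ n)

variable (hw : ∀ m n, w (m * n) = w m * w n)
include hw

theorem cardDivisorsPowMul_succ_le (r n : ℕ) :
    cardDivisorsPowMul (r + 1) w n ≤ (cardDivisorsPowMul r w * cardDivisorsPowMul r w) n := by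
  rw [mul_apply]
  calc cardDivisorsPowMul (r + 1) w n
      = ∑ _x ∈ n.divisorsAntidiagonal, (#n.divisors : ℝ) ^ r * w n := by
        rw [sum_const, Nat.card_divisorsAntidiagonal, nsmul_eq_mul, cardDivisorsPowMul_apply]
        ring
    _ ≤ ∑ x ∈ n.divisorsAntidiagonal, cardDivisorsPowMul r w x.1 * cardDivisorsPowMul r w x.2 := by
        refine sum_le_sum fun x hx => ?_
        obtain ⟨rfl, -⟩ := Nat.mem_divisorsAntidiagonal.1 hx
        have hτ : (#(x.1 * x.2).divisors : ℝ) ≤ #x.1.divisors * #x.2.divisors := by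
          exact_mod_cast Nat.card_divisors_mul_le x.1 x.2
        calc (#(x.1 * x.2).divisors : ℝ) ^ r * w (x.1 * x.2)
            ≤ ((#x.1.divisors : ℝ) * #x.2.divisors) ^ r * (w x.1 * w x.2) := by
              rw [hw]
              gcongr
              exact mul_nonneg (hw₀ _) (hw₀ _)
          _ = _ := by simp only [cardDivisorsPowMul_apply]; ring

theorem sum_Ioc_cardDivisorsPowMul_succ_le_of_le {r N : ℕ} (u : ArithmeticFunction ℝ)
    (B : ℕ → ℝ) (hS : ∀ M, ∑ m ∈ Ioc 0 M, cardDivisorsPowMul r w m ≤ B M)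
    (hB : ∀ d ∈ Ioc 0 N, cardDivisorsPowMul r w d * B (N / d) ≤ cardDivisorsPowMul r u d * B N) :
    ∑ n ∈ Ioc 0 N, cardDivisorsPowMul (r + 1) w n ≤
      (∑ d ∈ Ioc 0 N, cardDivisorsPowMul r u d) * B N :=
  calc ∑ n ∈ Ioc 0 N, cardDivisorsPowMul (r + 1) w n
      ≤ ∑ n ∈ Ioc 0 N, (cardDivisorsPowMul r w * cardDivisorsPowMul r w) n :=
        sum_le_sum fun n _ => cardDivisorsPowMul_succ_le hw₀ hw r n
    _ = ∑ d ∈ Ioc 0 N, cardDivisorsPowMul r w d * ∑ m ∈ Ioc 0 (N / d), cardDivisorsPowMul r w m :=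
        sum_Ioc_mul_eq_sum_sum _ _ N
    _ ≤ ∑ d ∈ Ioc 0 N, cardDivisorsPowMul r w d * B (N / d) :=
        sum_le_sum fun d _ => mul_le_mul_of_nonneg_left (hS _) (cardDivisorsPowMul_nonneg hw₀ r d)
    _ ≤ (∑ d ∈ Ioc 0 N, cardDivisorsPowMul r u d) * B N := by
        rw [sum_mul]
        exact sum_le_sum hB

end CompletelyMultiplicative

theorem exists_sum_Ioc_cardDivisorsPowMul_natInv_le (r : ℕ) :
    ∃ C > 0, ∀ N : ℕ,
      ∑ n ∈ Ioc 0 N, cardDivisorsPowMul r natInv n ≤ C * (1 + Real.log N) ^ 2 ^ r := by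
  induction r with
  | zero =>
    refine ⟨1, one_pos, fun N => ?_⟩
    simpa [sum_Ioc_inv_eq_harmonic] using harmonic_le_one_add_log N
  | succ r ih =>
    obtain ⟨C, hC, hS⟩ := ih
    refine ⟨C * C, by positivity, fun N => ?_⟩
    calc ∑ n ∈ Ioc 0 N, cardDivisorsPowMul (r + 1) natInv n
        ≤ (∑ d ∈ Ioc 0 N, cardDivisorsPowMul r natInv d) * (C * (1 + Real.log N) ^ 2 ^ r) := by
          refine sum_Ioc_cardDivisorsPowMul_succ_le_of_le natInv_nonneg natInv_mul natInv _ hS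
            fun d _ => ?_
          gcongr _ * (_ * (1 + ?_) ^ _)
          · exact cardDivisorsPowMul_nonneg natInv_nonneg r d
          · exact log_natCast_div_le N d
      _ ≤ C * (1 + Real.log N) ^ 2 ^ r * (C * (1 + Real.log N) ^ 2 ^ r) := by
          gcongr
          exact hS N
      _ = C * C * (1 + Real.log N) ^ 2 ^ (r + 1) := by ring

theorem exists_sum_Ioc_cardDivisorsPowMul_zeta_le (r : ℕ) :
    ∃ C > 0, ∀ N : ℕ,
      ∑ n ∈ Ioc 0 N, cardDivisorsPowMul r ζ n ≤ C * N * (1 + Real.log N) ^ (2 ^ r - 1) := by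
  induction r with
  | zero =>
    refine ⟨1, one_pos, fun N => ?_⟩
    simp only [cardDivisorsPowMul_apply, pow_zero, one_mul, natCoe_apply, Nat.sub_self, mul_one]
    exact_mod_cast (sum_Ioc_zeta N).le
  | succ r ih =>
    obtain ⟨C, hC, hS⟩ := ih
    obtain ⟨D, hD, hT⟩ := exists_sum_Ioc_cardDivisorsPowMul_natInv_le r
    refine ⟨D * C, by positivity, fun N => ?_⟩
    calc ∑ n ∈ Ioc 0 N, cardDivisorsPowMul (r + 1) ζ n
        ≤ (∑ d ∈ Ioc 0 N, cardDivisorsPowMul r natInv d) *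
            (C * N * (1 + Real.log N) ^ (2 ^ r - 1)) := by
          refine sum_Ioc_cardDivisorsPowMul_succ_le_of_le natCoe_zeta_nonneg natCoe_zeta_mul natInv
            _ hS fun d hd => ?_
          calc cardDivisorsPowMul r ζ d * (C * ↑(N / d) * (1 + Real.log ↑(N / d)) ^ (2 ^ r - 1))
              = (#d.divisors : ℝ) ^ r * (C * ↑(N / d) * (1 + Real.log ↑(N / d)) ^ (2 ^ r - 1)) := by
                rw [cardDivisorsPowMul_zeta_apply r (mem_Ioc.1 hd).1.ne']
            _ ≤ (#d.divisors : ℝ) ^ r * (C * (N / d) * (1 + Real.log N) ^ (2 ^ r - 1)) := by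
                gcongr _ * (_ * ?_ * (1 + ?_) ^ _)
                · exact Nat.cast_div_le
                · exact log_natCast_div_le N d
            _ = cardDivisorsPowMul r natInv d * (C * N * (1 + Real.log N) ^ (2 ^ r - 1)) := by
                rw [cardDivisorsPowMul_apply, natInv_apply]
                ring
      _ ≤ D * (1 + Real.log N) ^ 2 ^ r * (C * N * (1 + Real.log N) ^ (2 ^ r - 1)) := by
          gcongr
          exact hT N
      _ = D * C * N * (1 + Real.log N) ^ (2 ^ (r + 1) - 1) := by
          rw [pow_succ, mul_two, Nat.add_sub_assoc Nat.one_le_two_pow, pow_add]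
          ring

end ArithmeticFunction

theorem divisor_power_sum_bound_general (r : ℕ) :
    ∃ C : ℝ, 0 < C ∧ ∀ X : ℝ, 2 ≤ X →
      ∑ x ∈ Finset.Icc 1 ⌊X⌋₊, ((x.divisors.card : ℝ)) ^ r
        ≤ C * X * Real.log X ^ (2 ^ r - 1) := by
  obtain ⟨C, hC, hS⟩ := exists_sum_Ioc_cardDivisorsPowMul_zeta_le r
  refine ⟨C * 3 ^ (2 ^ r - 1), by positivity, fun X hX => ?_⟩
  set N := ⌊X⌋₊
  have hNX : (N : ℝ) ≤ X := Nat.floor_le (by linarith)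
  have hN : 0 < N := Nat.floor_pos.2 (by linarith)
  have hlogN : Real.log N ≤ Real.log X := log_le_log (by exact_mod_cast hN) hNX
  have hlog2 : 1 / 2 ≤ Real.log X := by linarith [log_two_gt_d9, log_le_log two_pos hX]
  have hsum : ∑ x ∈ Icc 1 N, (#x.divisors : ℝ) ^ r = ∑ n ∈ Ioc 0 N, cardDivisorsPowMul r ζ n := by
    rw [← Icc_add_one_left_eq_Ioc]
    refine sum_congr rfl fun n hn => ?_
    rw [cardDivisorsPowMul_zeta_apply r (by grind)]
  calc ∑ x ∈ Icc 1 N, (#x.divisors : ℝ) ^ r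
      ≤ C * N * (1 + Real.log N) ^ (2 ^ r - 1) := hsum ▸ hS N
    _ ≤ C * X * (3 * Real.log X) ^ (2 ^ r - 1) := by
        gcongr
        linarith
    _ = C * 3 ^ (2 ^ r - 1) * X * Real.log X ^ (2 ^ r - 1) := by ring

/-- For any fixed positive integer `r` and real `X ≥ 2`, the sum over natural numbers
`x ≤ X` of `τ(x)^r` is `O(X (log X)^(2^r - 1))`, where `τ` is the divisor function. -/
theorem divisor_power_sum_bound (r : ℕ) (hr : 0 < r) :
    ∃ C : ℝ, 0 < C ∧ ∀ X : ℝ, 2 ≤ X →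
      ∑ x ∈ Finset.Icc 1 ⌊X⌋₊, ((x.divisors.card : ℝ)) ^ r
        ≤ C * X * Real.log X ^ (2 ^ r - 1) :=
  divisor_power_sum_bound_general r
end

section
/- Let b, t, c be integers and r, s positive integers with gcd(b,r) = gcd(c,s) = 1. If |b/r − t·(c/s)| < 1/(r·s), then b/r = t·c/s as rational numbers and r = s / gcd(t, s). -/
/-! The integer `b s - t c r` equals `(b/r - t c/s) r s`, which has absolute value below `1`,
so `b/r = t c/s`. Comparing denominators in lowest terms: `b/r` is reduced since `gcd(b, r) = 1`,
while `t c/s` has denominator `s / gcd(t c, s) = s / gcd(t, s)` since `gcd(c, s) = 1`. -/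

theorem Int.mul_eq_mul_of_abs_div_sub_div_lt {K : Type*} [Field K] [LinearOrder K]
    [IsStrictOrderedRing K] {p q : ℤ} {r s : ℕ}
    (h : |(p : K) / r - q / s| < 1 / (r * s)) : p * s = q * r := by
  have hrs : (0 : K) < r * s := one_div_pos.mp ((abs_nonneg _).trans_lt h)
  have hr : (r : K) ≠ 0 := left_ne_zero_of_mul hrs.ne'
  have hs : (s : K) ≠ 0 := right_ne_zero_of_mul hrs.ne'
  have hcross : ((p * s - q * r : ℤ) : K) = ((p : K) / r - q / s) * (r * s) := by
    push_cast
    field_simp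
  have hlt : |((p * s - q * r : ℤ) : K)| < 1 := by
    rw [hcross, abs_mul, abs_of_pos hrs]
    exact (lt_div_iff₀ hrs).mp h
  have hzero : p * s - q * r = 0 := Int.abs_lt_one_iff.mp (by exact_mod_cast hlt)
  linarith

theorem Int.gcd_mul_right_of_gcd_eq_one {t c s : ℤ} (hcs : Int.gcd c s = 1) :
    Int.gcd (t * c) s = Int.gcd t s := by
  simp only [Int.gcd_eq_natAbs, Int.natAbs_mul] at hcs ⊢
  exact Nat.Coprime.gcd_mul_right_cancel _ hcs

theorem Rat.den_intCast_div_natCast (a : ℤ) {s : ℕ} (hs : s ≠ 0) :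
    ((a : ℚ) / s).den = s / Int.gcd a s := by
  have hsZ : (s : ℤ) ≠ 0 := by exact_mod_cast hs
  rw [← Int.cast_natCast, ← Rat.divInt_eq_div, Rat.den_divInt, if_neg hsZ, Int.gcd_comm]
  rfl

theorem rational_approx_coincide_general (b t c : ℤ) (r s : ℕ)
    (hbr : Int.gcd b r = 1) (hcs : Int.gcd c s = 1)
    (h : |(b : ℚ) / r - t * ((c : ℚ) / s)| < 1 / (r * s)) :
    (b : ℚ) / r = t * c / s ∧ r = s / Int.gcd t s := by
  have hrs : (0 : ℚ) < r * s := one_div_pos.mp ((abs_nonneg _).trans_lt h)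
  have hr : r ≠ 0 := by rintro rfl; simp at hrs
  have hs : s ≠ 0 := by rintro rfl; simp at hrs
  have hcross : b * s = t * c * r :=
    Int.mul_eq_mul_of_abs_div_sub_div_lt (K := ℚ) (by push_cast; rwa [mul_div_assoc])
  have heq : (b : ℚ) / r = t * c / s := by
    rw [div_eq_div_iff (by exact_mod_cast hr) (by exact_mod_cast hs)]
    exact_mod_cast hcross
  refine ⟨heq, ?_⟩
  have hden := congrArg Rat.den heq
  rwa [← Int.cast_mul, Rat.den_intCast_div_natCast _ hr, Rat.den_intCast_div_natCast _ hs, hbr,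
    Nat.div_one, Int.gcd_mul_right_of_gcd_eq_one hcs] at hden

/-- Let `b, t, c` be integers and `r, s` positive integers with `gcd(b,r) = gcd(c,s) = 1`.
If `|b/r − t·(c/s)| < 1/(r·s)`, then `b/r = t·c/s` as rational numbers and
`r = s / gcd(t, s)`. -/
theorem rational_approx_coincide (b t c : ℤ) (r s : ℕ) (hr : 0 < r) (hs : 0 < s)
    (hbr : Int.gcd b r = 1) (hcs : Int.gcd c s = 1)
    (h : |(b : ℚ) / r - t * ((c : ℚ) / s)| < 1 / (r * s)) :
    (b : ℚ) / r = t * c / s ∧ r = s / Int.gcd t s :=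
  rational_approx_coincide_general b t c r s hbr hcs h
end

section
/- If a real number β lies in the union over q ≤ Y, gcd(b,q)=1 of intervals [b/q − Y/(qP^d), b/q + Y/(qP^d)] for each coordinate β₁,…,β_R of β⃗ = α⃗ B, where B is an invertible R×R integer matrix with entries bounded by C in absolute value and Y = Q^{1/R}/(R·C), then each coordinate α_j of α⃗ admits a rational approximation a_j'/q' with a common denominator q' ≤ R! C^R Y^R ≤ Q and |α_j − a_j'/q'| ≤ Q/(q' P^d) for all j. -/
/-!
Since `α⃗ = β⃗ B⁻¹ = det(B)⁻¹ β⃗ adj(B)`, replacing each `β_k` by its approximation `b_k / r_k`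
gives a vector with common denominator `q' = |det B| ∏ r_k ≤ R! C^R Y^R`. Its error in the
`j`-th coordinate is `det(B)⁻¹ ∑_k (β_k - b_k / r_k) adj(B)_{kj}`; the cofactors are at most
`(R-1)! C^{R-1}` and `∏ r_i / r_k ≤ Y^{R-1}`, so `q'` times the error is at most
`R! C^{R-1} Y^R / P^d`. Finally `R! C^R Y^R ≤ (R C Y)^R = Q`, and `C ≥ 1` because `B` is a
nonzero integer matrix.
-/

open Finset Matrix
open scoped Nat

theorem Fintype.prod_le_mul_pow_card_sub_one {ι R : Type*} [Fintype ι] [DecidableEq ι]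
    [CommSemiring R] [PartialOrder R] [IsOrderedRing R] {f : ι → R} {Y : R}
    (h0 : ∀ i, 0 ≤ f i) (hY : ∀ i, f i ≤ Y) (k : ι) :
    ∏ i, f i ≤ f k * Y ^ (Fintype.card ι - 1) := by
  rw [← mul_prod_erase univ f (mem_univ k), ← card_univ, ← card_erase_of_mem (mem_univ k),
    ← prod_const]
  exact mul_le_mul_of_nonneg_left (prod_le_prod (fun i _ => h0 i) fun i _ => hY i) (h0 k)

theorem Fintype.prod_mul_div_eq_mul_prod_erase {ι K : Type*} [Fintype ι] [DecidableEq ι]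
    [Field K] {r : ι → K} (x : K) {k : ι} (hk : r k ≠ 0) :
    (∏ i, r i) * (x / r k) = x * ∏ i ∈ univ.erase k, r i := by
  rw [← mul_prod_erase univ r (mem_univ k)]
  field_simp

theorem abs_prod_mul_le_pow_div {ι : Type*} [Fintype ι] [DecidableEq ι] {r : ι → ℝ}
    {Y T e : ℝ} (hr : ∀ i, 0 < r i) (hrY : ∀ i, r i ≤ Y) {k : ι} (he : |e| ≤ Y / (r k * T)) :
    |(∏ i, r i) * e| ≤ Y ^ Fintype.card ι / T := by
  have hcard : Fintype.card ι - 1 + 1 = Fintype.card ι :=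
    Nat.sub_add_cancel (Fintype.card_pos_iff.2 ⟨k⟩)
  have hY : 0 ≤ Y := (hr k).le.trans (hrY k)
  calc |(∏ i, r i) * e| = (∏ i, r i) * |e| := by
        rw [abs_mul, abs_of_pos (prod_pos fun i _ => hr i)]
    _ ≤ (r k * Y ^ (Fintype.card ι - 1)) * (Y / (r k * T)) :=
        mul_le_mul (Fintype.prod_le_mul_pow_card_sub_one (fun i => (hr i).le) hrY k) he
          (abs_nonneg _) (mul_nonneg (hr k).le (pow_nonneg hY _))
    _ = Y ^ Fintype.card ι / T := by
        rw [mul_div_assoc', mul_assoc, mul_div_mul_left _ _ (hr k).ne', ← pow_succ, hcard]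

theorem factorial_mul_pow_mul_pow_le {R : ℕ} (hR : R ≠ 0) {C Q Y : ℝ} (hQ : 0 ≤ Q)
    (hC : 0 < C) (hY : Y = Q ^ ((1 : ℝ) / R) / (R * C)) : (R ! : ℝ) * C ^ R * Y ^ R ≤ Q := by
  have hY0 : 0 ≤ Y := by rw [hY]; positivity
  have hRCY : R * C * Y = Q ^ ((R : ℝ)⁻¹) := by
    rw [hY, one_div]; field_simp
  calc (R ! : ℝ) * C ^ R * Y ^ R ≤ (R : ℝ) ^ R * C ^ R * Y ^ R := by
        gcongr; exact_mod_cast Nat.factorial_le_pow R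
    _ = Q := by rw [← mul_pow, ← mul_pow, hRCY, Real.rpow_inv_natCast_pow hQ hR]

namespace Matrix

theorem abs_vecMul_apply_le {𝕜 ι κ : Type*} [CommRing 𝕜] [LinearOrder 𝕜]
    [IsStrictOrderedRing 𝕜] [Fintype ι] {v : ι → 𝕜} {M : Matrix ι κ 𝕜} {j : κ} {ε K : 𝕜}
    (hv : ∀ k, |v k| ≤ ε) (hM : ∀ k, |M k j| ≤ K) :
    |(v ᵥ* M) j| ≤ Fintype.card ι * (ε * K) := by
  calc |(v ᵥ* M) j| ≤ ∑ k, |v k| * |M k j| := by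
        simpa only [vecMul, dotProduct, abs_mul] using
          abs_sum_le_sum_abs (fun k => v k * M k j) univ
    _ ≤ ∑ _k : ι, ε * K :=
        sum_le_sum fun k _ => mul_le_mul (hv k) (hM k) (abs_nonneg _) ((abs_nonneg _).trans (hv k))
    _ = Fintype.card ι * (ε * K) := by simp

theorem adjugate_apply_le {R S : Type*} [CommRing R] [Nontrivial R] [CommRing S] [LinearOrder S]
    [IsStrictOrderedRing S] {m : ℕ} {A : Matrix (Fin (m + 1)) (Fin (m + 1)) R}
    {abv : AbsoluteValue R S} {x : S} (hx : ∀ i j, abv (A i j) ≤ x) (i j : Fin (m + 1)) :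
    abv (A.adjugate i j) ≤ m ! • x ^ m := by
  rw [adjugate_fin_succ_eq_det_submatrix, abv.map_mul, abv.map_pow, abv.map_neg, abv.map_one,
    one_pow, one_mul]
  simpa using det_le (A := A.submatrix j.succAbove i.succAbove) fun k l => hx _ _

theorem one_le_of_abs_le_of_det_ne_zero {ι : Type*} [Fintype ι] [DecidableEq ι] [Nonempty ι]
    {B : Matrix ι ι ℤ} (hB : B.det ≠ 0) {C : ℝ} (hC : ∀ i j, |(B i j : ℝ)| ≤ C) : 1 ≤ C := by
  by_contra! h
  refine hB ?_
  have hB0 : B = 0 := by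
    ext i j
    have : |B i j| < 1 := by exact_mod_cast (hC i j).trans_lt h
    simp only [abs_lt, Int.lt_iff_add_one_le] at this
    simp only [zero_apply]; omega
  rw [hB0, det_zero]

theorem exists_int_div_eq_vecMul_inv {ι K : Type*} [Fintype ι] [DecidableEq ι] [Field K]
    [CharZero K] {B : Matrix ι ι ℤ} (hB : B.det ≠ 0) (b : ι → ℤ) {r : ι → ℕ}
    (hr : ∀ k, r k ≠ 0) :
    ∃ a : ι → ℤ, ∀ j, (a j : K) / (B.det.natAbs * ∏ k, r k : ℕ) =
      ((fun k => (b k : K) / r k) ᵥ* (B.map (Int.cast : ℤ → K))⁻¹) j := by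
  set x : ι → K := fun k => (b k : K) / r k
  refine ⟨fun j => B.det.sign * ((fun k => b k * ∏ i ∈ univ.erase k, (r i : ℤ)) ᵥ* B.adjugate) j,
    fun j => ?_⟩
  have hdet : (B.map (Int.cast : ℤ → K)).det = B.det :=
    (RingHom.map_det (Int.castRingHom K) B).symm
  have hadj : (B.map (Int.cast : ℤ → K)).adjugate = B.adjugate.map Int.cast :=
    (RingHom.map_adjugate (Int.castRingHom K) B).symm
  have hsign : (B.det.sign : K) * B.det = B.det.natAbs := by
    rw [← Int.cast_natCast, ← Int.sign_mul_self_eq_natAbs, Int.cast_mul]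
  have hnum : (((fun k => b k * ∏ i ∈ univ.erase k, (r i : ℤ)) ᵥ* B.adjugate) j : K) =
      (∏ i, (r i : K)) * (x ᵥ* (B.map (Int.cast : ℤ → K)).adjugate) j := by
    simp only [hadj, vecMul, dotProduct, mul_sum, Int.cast_sum, Int.cast_mul, Int.cast_prod,
      Int.cast_natCast]
    refine sum_congr rfl fun k _ => ?_
    rw [← mul_assoc, Fintype.prod_mul_div_eq_mul_prod_erase _ (Nat.cast_ne_zero.2 (hr k))]
    rfl
  have hq : ((B.det.natAbs * ∏ k, r k : ℕ) : K) ≠ 0 :=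
    Nat.cast_ne_zero.2 (mul_ne_zero (Int.natAbs_ne_zero.2 hB) (prod_ne_zero_iff.2 fun i _ => hr i))
  have hB' : (B.det : K) ≠ 0 := by exact_mod_cast hB
  rw [inv_def, Ring.inverse_eq_inv', vecMul_smul, Pi.smul_apply, smul_eq_mul, hdet,
    div_eq_iff hq, Int.cast_mul, hnum, Nat.cast_mul, ← hsign, Nat.cast_prod]
  field_simp

theorem abs_det_mul_prod_le {n : Type*} [Fintype n] [DecidableEq n] {A : Matrix n n ℝ} {C Y : ℝ}
    (hC : ∀ i j, |A i j| ≤ C) {r : n → ℝ} (hr : ∀ k, 0 ≤ r k) (hrY : ∀ k, r k ≤ Y) :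
    |A.det| * ∏ k, r k ≤ (Fintype.card n)! * C ^ Fintype.card n * Y ^ Fintype.card n := by
  have hA : |A.det| ≤ (Fintype.card n)! * C ^ Fintype.card n := by
    simpa using det_le (abv := AbsoluteValue.abs) hC
  have hprod : ∏ k, r k ≤ Y ^ Fintype.card n := by
    simpa using prod_le_prod (s := univ) (fun k _ => hr k) fun k _ => hrY k
  exact mul_le_mul hA hprod (prod_nonneg fun k _ => hr k) ((abs_nonneg _).trans hA)

theorem abs_det_mul_prod_mul_abs_vecMul_inv_le {m : ℕ} {A : Matrix (Fin (m + 1)) (Fin (m + 1)) ℝ}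
    (hA : A.det ≠ 0) {C Y T : ℝ} (hC : ∀ i j, |A i j| ≤ C) {r e : Fin (m + 1) → ℝ}
    (hr : ∀ k, 0 < r k) (hrY : ∀ k, r k ≤ Y) (he : ∀ k, |e k| ≤ Y / (r k * T)) (j : Fin (m + 1)) :
    |A.det| * (∏ k, r k) * |(e ᵥ* A⁻¹) j| ≤ (m + 1)! * C ^ m * Y ^ (m + 1) / T := by
  have hcoord : ∀ k, |((∏ i, r i) • e) k| ≤ Y ^ (m + 1) / T := fun k => by
    have h := abs_prod_mul_le_pow_div hr hrY (he k)
    rwa [Fintype.card_fin] at h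
  have hadj : ∀ k, |A.adjugate k j| ≤ m ! * C ^ m := fun k => by
    simpa using adjugate_apply_le (abv := AbsoluteValue.abs) hC k j
  calc |A.det| * (∏ k, r k) * |(e ᵥ* A⁻¹) j| = |(((∏ i, r i) • e) ᵥ* A.adjugate) j| := by
        rw [inv_def, Ring.inverse_eq_inv', vecMul_smul, smul_vecMul, Pi.smul_apply, Pi.smul_apply,
          smul_eq_mul, smul_eq_mul, abs_mul, abs_mul, abs_inv,
          abs_of_pos (prod_pos fun k _ => hr k)]
        field_simp [abs_ne_zero.2 hA]
    _ ≤ (m + 1) * (Y ^ (m + 1) / T * (m ! * C ^ m)) := by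
        simpa using abs_vecMul_apply_le hcoord hadj
    _ = (m + 1)! * C ^ m * Y ^ (m + 1) / T := by
        rw [Nat.factorial_succ]; push_cast; ring

end Matrix

theorem simultaneous_rational_approximation_general (R d : ℕ) (hR : 1 ≤ R)
    (C Q P Y : ℝ) (hQ : 0 < Q) (hP : 1 ≤ P)
    (B : Matrix (Fin R) (Fin R) ℤ) (hdet : B.det ≠ 0)
    (hbd : ∀ i j, |(B i j : ℝ)| ≤ C)
    (α β : Fin R → ℝ) (hβ : ∀ k, β k = ∑ j, α j * (B j k : ℝ))
    (hY : Y = Q ^ ((1 : ℝ) / R) / (R * C))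
    (happrox : ∀ k, ∃ (b : ℤ) (r : ℕ), 1 ≤ r ∧ (r : ℝ) ≤ Y ∧ Int.gcd b r = 1 ∧
      |β k - (b : ℝ) / r| ≤ Y / (r * P ^ d)) :
    ∃ (q' : ℕ) (a' : Fin R → ℤ), 1 ≤ q' ∧
      (q' : ℝ) ≤ (R.factorial : ℝ) * C ^ R * Y ^ R ∧
      (R.factorial : ℝ) * C ^ R * Y ^ R ≤ Q ∧
      ∀ j, |α j - (a' j : ℝ) / q'| ≤ Q / (q' * P ^ d) := by
  obtain ⟨m, rfl⟩ : ∃ m, R = m + 1 := ⟨R - 1, by omega⟩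
  choose b r hr1 hrY _ herr using happrox
  set A : Matrix (Fin (m + 1)) (Fin (m + 1)) ℝ := B.map Int.cast
  have hC : 1 ≤ C := one_le_of_abs_le_of_det_ne_zero hdet hbd
  have hQ' := factorial_mul_pow_mul_pow_le m.succ_ne_zero hQ.le (by linarith) hY
  have hAdet : A.det = B.det := (RingHom.map_det (Int.castRingHom ℝ) B).symm
  have hA : A.det ≠ 0 := by rw [hAdet]; exact_mod_cast hdet
  have hr0 : ∀ k, (0 : ℝ) < r k := fun k => by exact_mod_cast hr1 k
  have hq : ((B.det.natAbs * ∏ k, r k : ℕ) : ℝ) = |A.det| * ∏ k, (r k : ℝ) := by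
    rw [Nat.cast_mul, Nat.cast_prod, hAdet, Nat.cast_natAbs, Int.cast_abs]
  have hα : β ᵥ* A⁻¹ = α := by
    rw [show β = α ᵥ* A from funext fun k => hβ k, vecMul_vecMul, mul_nonsing_inv _ hA.isUnit,
      vecMul_one]
  obtain ⟨a, ha⟩ :=
    exists_int_div_eq_vecMul_inv (K := ℝ) hdet b fun k => Nat.one_le_iff_ne_zero.1 (hr1 k)
  have hq1 : 1 ≤ B.det.natAbs * ∏ k, r k :=
    Nat.mul_pos (Int.natAbs_pos.2 hdet) (prod_pos fun k _ => hr1 k)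
  refine ⟨B.det.natAbs * ∏ k, r k, a, hq1, ?_, hQ', fun j => ?_⟩
  · rw [hq]
    simpa using abs_det_mul_prod_le (A := A) hbd (fun k => (hr0 k).le) hrY
  · have hT : 0 < P ^ d := by positivity
    have hY0 : 0 ≤ Y := (hr0 0).le.trans (hrY 0)
    have hCm := pow_le_pow_right₀ hC m.le_succ
    rw [ha j, ← hα, ← Pi.sub_apply, ← sub_vecMul, le_div_iff₀ (mul_pos (by exact_mod_cast hq1) hT),
      hq, ← mul_assoc, ← le_div_iff₀ hT, mul_comm]
    calc _ ≤ (m + 1)! * C ^ m * Y ^ (m + 1) / P ^ d :=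
          abs_det_mul_prod_mul_abs_vecMul_inv_le hA hbd hr0 hrY herr j
      _ ≤ (m + 1)! * C ^ (m + 1) * Y ^ (m + 1) / P ^ d := by gcongr
      _ ≤ Q / P ^ d := by gcongr

/-- Simultaneous rational approximation after an invertible integral linear change:
if `β⃗ = α⃗ B` with `B` an invertible `R × R` integer matrix having entries bounded by
`C`, `Y = Q^{1/R}/(R·C)`, and every coordinate `β_k` admits an approximation `b/r` with
`r ≤ Y`, `gcd(b,r)=1`, `|β_k − b/r| ≤ Y/(rP^d)`, then the coordinates `α_j` admit
rational approximations `a_j'/q'` with a common denominator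
`q' ≤ R!·C^R·Y^R ≤ Q` and `|α_j − a_j'/q'| ≤ Q/(q'P^d)` for all `j`. -/
theorem simultaneous_rational_approximation (R d : ℕ) (hR : 1 ≤ R) (hd : 2 ≤ d)
    (C Q P Y : ℝ) (hQ : 0 < Q) (hP : 1 ≤ P)
    (B : Matrix (Fin R) (Fin R) ℤ) (hdet : B.det ≠ 0)
    (hbd : ∀ i j, |(B i j : ℝ)| ≤ C)
    (α β : Fin R → ℝ) (hβ : ∀ k, β k = ∑ j, α j * (B j k : ℝ))
    (hY : Y = Q ^ ((1 : ℝ) / R) / (R * C))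
    (happrox : ∀ k, ∃ (b : ℤ) (r : ℕ), 1 ≤ r ∧ (r : ℝ) ≤ Y ∧ Int.gcd b r = 1 ∧
      |β k - (b : ℝ) / r| ≤ Y / (r * P ^ d)) :
    ∃ (q' : ℕ) (a' : Fin R → ℤ), 1 ≤ q' ∧
      (q' : ℝ) ≤ (R.factorial : ℝ) * C ^ R * Y ^ R ∧
      (R.factorial : ℝ) * C ^ R * Y ^ R ≤ Q ∧
      ∀ j, |α j - (a' j : ℝ) / q'| ≤ Q / (q' * P ^ d) :=
  simultaneous_rational_approximation_general R d hR C Q P Y hQ hP B hdet hbd α β hβ hY happrox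
end

section
/- Let Δ < 1/(d−1) be a fixed positive real, q a positive integer, t a positive integer, and w_t(z) = ((z+t)^d − z^d)/t. For X ≥ 2, the count Σ_{s | q, s ≤ d X^{d−1}} s^Δ · #{1 ≤ z ≤ X : gcd(z,t)=1, s | w_t(z)} is O(X q^ε), where the implied constant depends on d, Δ, ε. -/
/-!
Since `(z + t) ^ d - z ^ d = t * w_t(z)`, the inner count is at most `ρ(s) (X / s + 1)`, where
`ρ(s)` counts the residues `r` mod `s`, coprime to `s`, with `s ∣ w_t(r)`: a solution `z` coprime
to `t` is automatically coprime to `s`. For a unit `r`, `w_t(r) = r ^ (d - 1) g(t / r)` with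
`g(u) = ((1 + u) ^ d - 1) / u`, and `r ↦ t / r` has fibres of size `gcd(s, t)`, which divides `d`;
so `ρ(s) ≤ d N_g(s)`, where `N_g(s)` is the number of roots of `g` mod `s`. The monic polynomial
`g` satisfies `a g + b g' = d`, so roots of `g` mod `p ^ k` that agree mod `p ^ (v + 1)`,
`p ^ v ∥ d`, agree mod `p ^ (k - v)`; hence `N_g(p ^ k)` is bounded in terms of `d`, and
`N_g(s) ≤ K ^ ω(s) ≪ s ^ ε'`. Taking `ε' = 1 / (d - 1) - Δ`, each term is
`≪ s ^ (1 / (d - 1)) (X / s + 1) ≪ X` because `s ≤ d X ^ (d - 1)`, and there are `τ(q) ≪ q ^ ε`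
terms.
-/

open Finset Polynomial

namespace DivisorCongruenceCount

theorem le_pow_card_primeFactors_of_le_mul {f : ℕ → ℕ} {K : ℕ} (h1 : f 1 ≤ 1)
    (hmul : ∀ a b, a.Coprime b → f (a * b) ≤ f a * f b)
    (hpow : ∀ p k, p.Prime → 0 < k → f (p ^ k) ≤ K) {n : ℕ} (hn : n ≠ 0) :
    f n ≤ K ^ #n.primeFactors := by
  induction n using Nat.recOnPosPrimePosCoprime with
  | zero => exact absurd rfl hn
  | one => simpa using h1
  | prime_pow p k hp hk =>
    rw [Nat.primeFactors_prime_pow hk.ne' hp, card_singleton, pow_one]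
    exact hpow p k hp hk
  | coprime a b ha hb hab iha ihb =>
    calc f (a * b) ≤ K ^ #a.primeFactors * K ^ #b.primeFactors :=
          (hmul a b hab).trans (Nat.mul_le_mul (iha (by omega)) (ihb (by omega)))
      _ = K ^ #(a * b).primeFactors := by
          rw [← pow_add, hab.primeFactors_mul, card_union_of_disjoint hab.disjoint_primeFactors]

/-- Only the primes below `R ^ (1 / ε)` contribute more than `p ^ ε`. -/
theorem exists_pow_card_primeFactors_le_rpow {R ε : ℝ} (hR : 1 ≤ R) (hε : 0 < ε) :
    ∃ C > 0, ∀ n : ℕ, n ≠ 0 → R ^ #n.primeFactors ≤ C * (n : ℝ) ^ ε := by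
  set M := ⌈R ^ (1 / ε)⌉₊
  refine ⟨R ^ (M + 1), by positivity, fun n hn => ?_⟩
  have hsmall : ∏ p ∈ n.primeFactors, (if p ≤ M then R else 1) ≤ R ^ (M + 1) := by
    rw [prod_ite, prod_const, prod_const_one, mul_one]
    refine pow_le_pow_right₀ hR ((card_le_card fun p hp => ?_).trans (card_range _).le)
    simpa [Nat.lt_succ_iff] using (mem_filter.mp hp).2
  have hlarge : ∏ p ∈ n.primeFactors, (p : ℝ) ^ ε ≤ (n : ℝ) ^ ε := by
    rw [Real.finsetProd_rpow _ _ (fun _ _ => by positivity), ← Nat.cast_prod]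
    exact Real.rpow_le_rpow (by positivity)
      (by exact_mod_cast Nat.le_of_dvd (by omega) (Nat.prod_primeFactors_dvd n)) hε.le
  calc R ^ #n.primeFactors = ∏ _p ∈ n.primeFactors, R := (prod_const R).symm
    _ ≤ ∏ p ∈ n.primeFactors, ((if p ≤ M then R else 1) * (p : ℝ) ^ ε) := by
        refine prod_le_prod (fun _ _ => by positivity) fun p _ => ?_
        have hp1 : 1 ≤ (p : ℝ) ^ ε :=
          Real.one_le_rpow (by exact_mod_cast Nat.pos_of_mem_primeFactors ‹_›) hε.le
        split_ifs with hpM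
        · nlinarith
        · calc R = (R ^ (1 / ε)) ^ ε := by
                rw [← Real.rpow_mul (by linarith), one_div_mul_cancel hε.ne', Real.rpow_one]
            _ ≤ (p : ℝ) ^ ε := Real.rpow_le_rpow (by positivity)
                ((Nat.le_ceil _).trans (by exact_mod_cast (not_le.mp hpM).le)) hε.le
            _ = 1 * (p : ℝ) ^ ε := (one_mul _).symm
    _ = (∏ p ∈ n.primeFactors, (if p ≤ M then R else 1)) *
          ∏ p ∈ n.primeFactors, (p : ℝ) ^ ε := prod_mul_distrib
    _ ≤ R ^ (M + 1) * (n : ℝ) ^ ε :=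
        mul_le_mul hsmall hlarge (prod_nonneg fun _ _ => by positivity) (by positivity)

theorem add_one_le_mul_rpow {δ : ℝ} (hδ : 0 < δ) {p : ℕ} (hp : 2 ≤ p) (a : ℕ) :
    (a : ℝ) + 1 ≤ (1 + (δ * Real.log 2)⁻¹) * ((p : ℝ) ^ a) ^ δ := by
  have hlog : 0 < δ * Real.log 2 := mul_pos hδ (Real.log_pos one_lt_two)
  have hexp : 1 + a * (δ * Real.log 2) ≤ ((p : ℝ) ^ a) ^ δ :=
    calc 1 + a * (δ * Real.log 2) ≤ Real.exp (a * (δ * Real.log 2)) := by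
          linarith [Real.add_one_le_exp (a * (δ * Real.log 2))]
      _ = ((2 : ℝ) ^ a) ^ δ := by
          rw [← Real.rpow_natCast, ← Real.rpow_mul zero_le_two, Real.rpow_def_of_pos two_pos]
          ring_nf
      _ ≤ ((p : ℝ) ^ a) ^ δ := by gcongr; exact_mod_cast hp
  calc (a : ℝ) + 1 = (1 + (δ * Real.log 2)⁻¹) * (1 + a * (δ * Real.log 2))
          - (δ * Real.log 2)⁻¹ - a * (δ * Real.log 2) := by field_simp; ring
    _ ≤ (1 + (δ * Real.log 2)⁻¹) * (1 + a * (δ * Real.log 2)) := by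
        have : 0 ≤ (δ * Real.log 2)⁻¹ := by positivity
        nlinarith [show (0 : ℝ) ≤ a by positivity]
    _ ≤ (1 + (δ * Real.log 2)⁻¹) * ((p : ℝ) ^ a) ^ δ := by gcongr

theorem exists_card_divisors_le_rpow {ε : ℝ} (hε : 0 < ε) :
    ∃ C > 0, ∀ n : ℕ, n ≠ 0 → (#n.divisors : ℝ) ≤ C * (n : ℝ) ^ ε := by
  set R := 1 + (ε / 2 * Real.log 2)⁻¹
  have hR : 1 ≤ R := le_add_of_nonneg_right (by positivity)
  obtain ⟨C, hC, hCR⟩ := exists_pow_card_primeFactors_le_rpow hR (half_pos hε)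
  refine ⟨C, hC, fun n hn => ?_⟩
  have hprod : ∏ p ∈ n.primeFactors, ((p : ℝ) ^ n.factorization p) ^ (ε / 2) =
      (n : ℝ) ^ (ε / 2) := by
    rw [Real.finsetProd_rpow _ _ (fun _ _ => by positivity)]
    exact_mod_cast
      congrArg (fun m : ℕ => (m : ℝ) ^ (ε / 2)) (Nat.prod_factorization_pow_eq_self hn)
  calc (#n.divisors : ℝ) = ∏ p ∈ n.primeFactors, ((n.factorization p : ℝ) + 1) := by
        rw [Nat.card_divisors hn]; push_cast; rfl
    _ ≤ ∏ p ∈ n.primeFactors, (R * ((p : ℝ) ^ n.factorization p) ^ (ε / 2)) :=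
        prod_le_prod (fun _ _ => by positivity) fun p hp =>
          add_one_le_mul_rpow (half_pos hε) (Nat.prime_of_mem_primeFactors hp).two_le _
    _ = R ^ #n.primeFactors * (n : ℝ) ^ (ε / 2) := by rw [prod_mul_distrib, prod_const, hprod]
    _ ≤ C * (n : ℝ) ^ (ε / 2) * (n : ℝ) ^ (ε / 2) := by gcongr; exact hCR n hn
    _ = C * (n : ℝ) ^ ε := by
        rw [mul_assoc, ← Real.rpow_add (by exact_mod_cast Nat.pos_of_ne_zero hn), add_halves]

theorem pow_dvd_of_pow_dvd_mul_of_not_pow_succ_dvd {M : Type*} [CommMonoidWithZero M]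
    [IsCancelMulZero M] {p a : M} (hp : Prime p) {v : ℕ} :
    ∀ {b : M} {k : ℕ}, p ^ k ∣ a * b → ¬ p ^ (v + 1) ∣ b → p ^ (k - v) ∣ a := by
  induction v with
  | zero =>
    intro b k hab hb
    exact hp.pow_dvd_of_dvd_mul_right k (by simpa using hb) hab
  | succ v ih =>
    intro b k hab hb
    by_cases hpb : p ∣ b
    · obtain ⟨b', rfl⟩ := hpb
      rcases k with _ | k
      · simp
      have hab' : p ^ k ∣ a * b' := (mul_dvd_mul_iff_left hp.ne_zero).mp <| by
        rw [← pow_succ']; simpa [mul_left_comm] using hab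
      have hb' : ¬ p ^ (v + 1) ∣ b' := fun h =>
        hb (by rw [pow_succ']; exact mul_dvd_mul_left p h)
      simpa using ih hab' hb'
    · exact (pow_dvd_pow p (Nat.sub_le k _)).trans (hp.pow_dvd_of_dvd_mul_right k hpb hab)

/-- `f x - f y = (x - y) (f' y + c (x - y))`, and `p ^ (v + 1) ∤ f' y` because `e ∈ (f, f')`. -/
theorem pow_dvd_sub_of_dvd_eval {R : Type*} [CommRing R] [IsDomain R] {f A B : R[X]}
    {e p x y : R} {k v : ℕ} (hb : A * f + B * derivative f = C e) (hp : Prime p)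
    (he : ¬ p ^ (v + 1) ∣ e) (hvk : v + 1 ≤ k) (hx : p ^ k ∣ f.eval x) (hy : p ^ k ∣ f.eval y)
    (hxy : p ^ (v + 1) ∣ x - y) : p ^ (k - v) ∣ x - y := by
  obtain ⟨c, hc⟩ := f.binomExpansion y (x - y)
  rw [add_sub_cancel] at hc
  have hy' : p ^ (v + 1) ∣ f.eval y := (pow_dvd_pow p hvk).trans hy
  have hf' : ¬ p ^ (v + 1) ∣ (derivative f).eval y := fun h => he <| by
    have := congrArg (eval y) hb
    simp only [eval_add, eval_mul, eval_C] at this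
    exact this ▸ dvd_add (hy'.mul_left _) (h.mul_left _)
  have hprod : p ^ k ∣ (x - y) * ((derivative f).eval y + c * (x - y)) := by
    have : (x - y) * ((derivative f).eval y + c * (x - y)) = f.eval x - f.eval y := by
      rw [hc]; ring
    exact this ▸ dvd_sub hx hy
  refine pow_dvd_of_pow_dvd_mul_of_not_pow_succ_dvd hp hprod fun h => hf' ?_
  exact (dvd_add_left (hxy.mul_left c)).mp h

theorem dvd_eval_natMod_iff (f : ℤ[X]) (s r : ℕ) :
    (s : ℤ) ∣ f.eval ((r % s : ℕ) : ℤ) ↔ (s : ℤ) ∣ f.eval (r : ℤ) := by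
  have h : (s : ℤ) ∣ f.eval (r : ℤ) - f.eval ((r % s : ℕ) : ℤ) :=
    (Int.mod_modEq r s).dvd.trans (by simpa using sub_dvd_eval_sub (r : ℤ) _ f)
  exact ⟨fun hmod => by simpa using dvd_add h hmod, fun hr => (dvd_sub_right hr).mp h⟩

theorem card_filter_range_dvd_eval_le_natDegree {f : ℤ[X]} (hf : f.Monic) {p : ℕ}
    (hp : p.Prime) : #{r ∈ range p | (p : ℤ) ∣ f.eval ((r : ℕ) : ℤ)} ≤ f.natDegree := by
  have : Fact p.Prime := ⟨hp⟩
  set fp := f.map (Int.castRingHom (ZMod p))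
  calc #{r ∈ range p | (p : ℤ) ∣ f.eval ((r : ℕ) : ℤ)} ≤ #fp.roots.toFinset := by
        refine card_le_card_of_injOn (fun r => (r : ZMod p)) (fun r hr => ?_)
          (fun r hr r' hr' h => ?_)
        · simp only [coe_filter, mem_range, Set.mem_ofPred_eq] at hr
          rw [mem_coe, Multiset.mem_toFinset, mem_roots (hf.map _).ne_zero, IsRoot,
            eval_natCast_map]
          exact (ZMod.intCast_zmod_eq_zero_iff_dvd _ p).mpr hr.2
        · simp only [coe_filter, mem_range, Set.mem_ofPred_eq] at hr hr'
          simpa [Nat.mod_eq_of_lt hr.1, Nat.mod_eq_of_lt hr'.1] using congrArg ZMod.val h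
    _ ≤ fp.natDegree := (Multiset.toFinset_card_le _).trans (card_roots' _)
    _ = f.natDegree := hf.natDegree_map _

def rootCount (f : ℤ[X]) (s : ℕ) : ℕ := #{u ∈ range s | (s : ℤ) ∣ f.eval ((u : ℕ) : ℤ)}

theorem rootCount_le (f : ℤ[X]) (s : ℕ) : rootCount f s ≤ s :=
  (card_filter_le _ _).trans (card_range s).le

theorem rootCount_mul_le (f : ℤ[X]) {a b : ℕ} (hab : a.Coprime b) :
    rootCount f (a * b) ≤ rootCount f a * rootCount f b := by
  rcases Nat.eq_zero_or_pos a with rfl | ha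
  · simp [rootCount]
  rcases Nat.eq_zero_or_pos b with rfl | hb
  · simp [rootCount]
  rw [rootCount, rootCount, rootCount, ← card_product]
  refine card_le_card_of_injOn (fun r => (r % a, r % b)) (fun r hr => ?_)
    (fun r hr r' hr' h => ?_)
  · simp only [coe_filter, mem_range, Set.mem_ofPred_eq] at hr
    have hdvd (c : ℕ) (hc : c ∣ a * b) : (c : ℤ) ∣ f.eval ((r % c : ℕ) : ℤ) :=
      (dvd_eval_natMod_iff f c r).mpr
        ((Int.natCast_dvd_natCast.mpr hc).trans (by exact_mod_cast hr.2))
    simp only [coe_product, coe_filter, mem_range, Set.mem_prod, Set.mem_ofPred_eq]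
    exact ⟨⟨Nat.mod_lt r ha, hdvd a (dvd_mul_right a b)⟩,
      Nat.mod_lt r hb, hdvd b (dvd_mul_left b a)⟩
  · simp only [coe_filter, mem_range, Set.mem_ofPred_eq, Prod.mk.injEq] at hr hr' h
    have hab' : r ≡ r' [MOD a * b] := (Nat.modEq_and_modEq_iff_modEq_mul hab).mp h
    rwa [Nat.ModEq, Nat.mod_eq_of_lt hr.1, Nat.mod_eq_of_lt hr'.1] at hab'

/-- A root `z` mod `p ^ k` is determined by its residue mod `p ^ (v + 1)` (two base-`p` digit
blocks) and by `z / p ^ (k - v)`, since roots agreeing mod `p ^ (v + 1)` agree mod `p ^ (k - v)`. -/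
theorem rootCount_prime_pow_le_of_lt {f A B : ℤ[X]} {e : ℤ}
    (hb : A * f + B * derivative f = C e) {p k v : ℕ} (hp : p.Prime)
    (he : ¬ (p : ℤ) ^ (v + 1) ∣ e) (hvk : v < k) :
    rootCount f (p ^ k) ≤ #{r ∈ range p | (p : ℤ) ∣ f.eval ((r : ℕ) : ℤ)} * (p ^ v * p ^ v) := by
  have hpk : p ^ k = p ^ (k - v) * p ^ v := by rw [← pow_add, Nat.sub_add_cancel hvk.le]
  rw [rootCount, ← card_range (p ^ v), ← card_product, ← card_product]
  refine card_le_card_of_injOn (fun z => (z % p, z / p % p ^ v, z / p ^ (k - v)))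
    (fun z hz => ?_) (fun z hz z' hz' h => ?_)
  · simp only [coe_filter, mem_range, Set.mem_ofPred_eq] at hz
    simp only [coe_product, coe_filter, coe_range, mem_range, Set.mem_prod, Set.mem_Iio,
      Set.mem_ofPred_eq]
    refine ⟨⟨Nat.mod_lt z hp.pos, (dvd_eval_natMod_iff f p z).mpr ?_⟩,
      Nat.mod_lt _ (pow_pos hp.pos v), Nat.div_lt_of_lt_mul (hpk ▸ hz.1)⟩
    exact (dvd_pow_self (p : ℤ) (by omega : k ≠ 0)).trans (by exact_mod_cast hz.2)
  · simp only [coe_filter, mem_range, Set.mem_ofPred_eq, Prod.mk.injEq] at hz hz' h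
    have hlow : z' ≡ z [MOD p ^ (v + 1)] := by
      rw [Nat.ModEq, pow_succ', Nat.mod_mul, Nat.mod_mul, h.1, h.2.1]
    have hsep : (p : ℤ) ^ (k - v) ∣ (z : ℤ) - z' :=
      pow_dvd_sub_of_dvd_eval hb (Nat.prime_iff_prime_int.mp hp) he hvk
        (by exact_mod_cast hz.2) (by exact_mod_cast hz'.2)
        (by exact_mod_cast Nat.modEq_iff_dvd.mp hlow)
    have hhigh : z' ≡ z [MOD p ^ (k - v)] := Nat.modEq_iff_dvd.mpr (by exact_mod_cast hsep)
    exact Nat.ext_div_mod h.2.2 hhigh.symm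

theorem rootCount_prime_pow_le {f A B : ℤ[X]} {e : ℤ} (hf : f.Monic) (he : e ≠ 0)
    (hb : A * f + B * derivative f = C e) {p : ℕ} (hp : p.Prime) (k : ℕ) :
    rootCount f (p ^ k) ≤ (f.natDegree + 1) * e.natAbs ^ 2 := by
  set v := e.natAbs.factorization p
  have he0 : e.natAbs ≠ 0 := Int.natAbs_ne_zero.mpr he
  have hpv : p ^ v ≤ e.natAbs := Nat.le_of_dvd (Nat.pos_of_ne_zero he0) (Nat.ordProj_dvd _ _)
  rcases le_or_gt k v with hkv | hvk
  · calc rootCount f (p ^ k) ≤ p ^ k := rootCount_le f _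
      _ ≤ e.natAbs := (Nat.pow_le_pow_right hp.pos hkv).trans hpv
      _ ≤ (f.natDegree + 1) * e.natAbs ^ 2 := by nlinarith [Nat.pos_of_ne_zero he0]
  · have he' : ¬ (p : ℤ) ^ (v + 1) ∣ e := by
      rw [← Int.natCast_pow, Int.ofNat_dvd_left]
      exact Nat.pow_succ_factorization_not_dvd he0 hp
    calc rootCount f (p ^ k) ≤ f.natDegree * (e.natAbs * e.natAbs) :=
          (rootCount_prime_pow_le_of_lt hb hp he' hvk).trans <|
            Nat.mul_le_mul (card_filter_range_dvd_eval_le_natDegree hf hp)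
              (Nat.mul_le_mul hpv hpv)
      _ ≤ (f.natDegree + 1) * e.natAbs ^ 2 := by nlinarith

theorem exists_rootCount_le_rpow {f A B : ℤ[X]} {e : ℤ} (hf : f.Monic) (he : e ≠ 0)
    (hb : A * f + B * derivative f = C e) {ε : ℝ} (hε : 0 < ε) :
    ∃ c > 0, ∀ s : ℕ, s ≠ 0 → (rootCount f s : ℝ) ≤ c * (s : ℝ) ^ ε := by
  set K := (f.natDegree + 1) * e.natAbs ^ 2
  have hK : (1 : ℝ) ≤ K := by
    exact_mod_cast Nat.one_le_iff_ne_zero.mpr (by positivity [Int.natAbs_ne_zero.mpr he])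
  obtain ⟨c, hc, hcK⟩ := exists_pow_card_primeFactors_le_rpow hK hε
  refine ⟨c, hc, fun s hs => ?_⟩
  have hroot : rootCount f s ≤ K ^ #s.primeFactors :=
    le_pow_card_primeFactors_of_le_mul (rootCount_le f 1) (fun _ _ => rootCount_mul_le f)
      (fun _ k hp _ => rootCount_prime_pow_le hf he hb hp k) hs
  calc (rootCount f s : ℝ) ≤ (K : ℝ) ^ #s.primeFactors := by exact_mod_cast hroot
    _ ≤ c * (s : ℝ) ^ ε := hcK s hs

/-- The paper's `w_t(z) = ((z + t) ^ d - z ^ d) / t`, written without division. -/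
def w {R : Type*} [CommRing R] (d : ℕ) (t z : R) : R :=
  ∑ i ∈ range d, (z + t) ^ i * z ^ (d - 1 - i)

section w

variable {R S : Type*} [CommRing R] [CommRing S] (d : ℕ)

theorem w_mul_self (t z : R) : w d t z * t = (z + t) ^ d - z ^ d := by
  have h := geom_sum₂_mul (z + t) z d
  rwa [add_sub_cancel_left] at h

theorem map_w (φ : R →+* S) (t z : R) : φ (w d t z) = w d (φ t) (φ z) := by
  simp [w]

theorem w_mul_mul (a t z : R) : w d (a * t) (a * z) = a ^ (d - 1) * w d t z := by
  rw [w, w, mul_sum]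
  refine sum_congr rfl fun i hi => ?_
  have ha : a ^ (d - 1) = a ^ i * a ^ (d - 1 - i) := by
    rw [← pow_add]; congr 1; have := mem_range.mp hi; omega
  rw [← mul_add, mul_pow, mul_pow, ha]
  ring

theorem w_zero_left (z : R) : w d 0 z = d * z ^ (d - 1) := by
  rw [w, show (d : R) * z ^ (d - 1) = ∑ _i ∈ range d, z ^ (d - 1) by simp]
  refine sum_congr rfl fun i hi => ?_
  rw [add_zero, ← pow_add]
  congr 1
  have := mem_range.mp hi
  omega

end w

/-- The polynomial `u ↦ w_u(1) = ((1 + u) ^ d - 1) / u`. -/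
noncomputable def wOne (d : ℕ) : ℤ[X] := w d X 1

theorem eval_wOne (d : ℕ) (u : ℤ) : (wOne d).eval u = w d u 1 := by
  simpa [wOne] using map_w d (evalRingHom u) X 1

variable {d : ℕ}

theorem sub_pow_div_eq_w {t : ℕ} (ht : 0 < t) (z : ℕ) :
    (((z + t : ℕ) : ℤ) ^ d - (z : ℤ) ^ d) / (t : ℤ) = w d (t : ℤ) (z : ℤ) := by
  rw [Nat.cast_add, ← w_mul_self, Int.mul_ediv_cancel _ (by exact_mod_cast ht.ne')]

theorem dvd_w_iff (s : ℕ) (t z : ℤ) :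
    (s : ℤ) ∣ w d t z ↔ w d (t : ZMod s) (z : ZMod s) = 0 := by
  rw [← ZMod.intCast_zmod_eq_zero_iff_dvd, ← eq_intCast (Int.castRingHom (ZMod s)), map_w]
  rfl

theorem coprime_of_dvd_w (hd : d ≠ 0) {s t z : ℕ} (hzt : z.Coprime t)
    (hs : (s : ℤ) ∣ w d (t : ℤ) (z : ℤ)) : z.Coprime s := by
  refine Nat.coprime_of_dvd fun p hp hpz hps =>
    hp.one_lt.ne' (Nat.eq_one_of_dvd_coprimes hzt hpz ?_)
  have hp' : Prime (p : ℤ) := Nat.prime_iff_prime_int.mp hp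
  have hpz' : (p : ℤ) ∣ z := Int.natCast_dvd_natCast.mpr hpz
  have hsum : (p : ℤ) ∣ ((z : ℤ) + t) ^ d := by
    have h := dvd_add (((Int.natCast_dvd_natCast.mpr hps).trans hs).mul_right (t : ℤ))
      (dvd_pow hpz' hd)
    rwa [w_mul_self, sub_add_cancel] at h
  exact Int.natCast_dvd_natCast.mp ((dvd_add_right hpz').mp (hp'.dvd_of_dvd_pow hsum))

theorem gcd_dvd_of_dvd_w {s t r : ℕ} (hr : r.Coprime s) (hs : (s : ℤ) ∣ w d (t : ℤ) (r : ℤ)) :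
    s.gcd t ∣ d := by
  set g := s.gcd t
  have hw := (dvd_w_iff g _ _).mp ((Int.natCast_dvd_natCast.mpr (Nat.gcd_dvd_left s t)).trans hs)
  have ht : ((t : ℤ) : ZMod g) = 0 := by
    simpa using (ZMod.natCast_eq_zero_iff t g).mpr (Nat.gcd_dvd_right s t)
  have hu : IsUnit ((r : ℤ) : ZMod g) := by
    simpa using (ZMod.isUnit_iff_coprime r g).mpr (hr.coprime_dvd_right (Nat.gcd_dvd_left s t))
  rw [ht, w_zero_left, (hu.pow _).mul_left_eq_zero] at hw
  exact (ZMod.natCast_eq_zero_iff d g).mp hw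

theorem dvd_eval_of_dvd_w {s t r : ℕ} [NeZero s] (hr : r.Coprime s)
    (hs : (s : ℤ) ∣ w d (t : ℤ) (r : ℤ)) :
    (s : ℤ) ∣ (wOne d).eval (((r : ZMod s)⁻¹ * t).val : ℤ) := by
  have hu : IsUnit (r : ZMod s) := (ZMod.isUnit_iff_coprime r s).mpr hr
  have hw := (dvd_w_iff s _ _).mp hs
  rw [eval_wOne, dvd_w_iff]
  push_cast at hw ⊢
  rw [ZMod.natCast_zmod_val]
  have hhom : w d (t : ZMod s) r = (r : ZMod s) ^ (d - 1) * w d ((r : ZMod s)⁻¹ * t) 1 := by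
    rw [← w_mul_mul, ← mul_assoc, ZMod.mul_inv_of_unit _ hu, one_mul, mul_one]
  rwa [hhom, (hu.pow _).mul_right_eq_zero] at hw

theorem modEq_of_inv_mul_eq {s t r r' : ℕ} (hs : 0 < s) (hr : r.Coprime s) (hr' : r'.Coprime s)
    (h : (r : ZMod s)⁻¹ * t = (r' : ZMod s)⁻¹ * t) : r ≡ r' [MOD s / s.gcd t] := by
  refine Nat.ModEq.cancel_right_div_gcd hs ((ZMod.natCast_eq_natCast_iff _ _ _).mp ?_)
  have hu := ZMod.mul_inv_of_unit _ ((ZMod.isUnit_iff_coprime r s).mpr hr)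
  have hu' := ZMod.mul_inv_of_unit _ ((ZMod.isUnit_iff_coprime r' s).mpr hr')
  push_cast
  calc (r : ZMod s) * t = r * r' * ((r' : ZMod s)⁻¹ * t) := by
        rw [← mul_assoc, mul_assoc _ _ (r' : ZMod s)⁻¹, hu', mul_one]
    _ = r * r' * ((r : ZMod s)⁻¹ * t) := by rw [h]
    _ = r' * t := by
        rw [mul_comm (r : ZMod s), ← mul_assoc, mul_assoc _ _ (r : ZMod s)⁻¹, hu, mul_one]

theorem card_le_of_modEq {A : Finset ℕ} {m g : ℕ} (hA : ∀ r ∈ A, r < m * g)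
    (hmod : ∀ r ∈ A, ∀ r' ∈ A, r ≡ r' [MOD m]) : #A ≤ g :=
  calc #A ≤ #(range g) :=
        card_le_card_of_injOn (· / m)
          (fun r hr => by simpa using Nat.div_lt_of_lt_mul (hA r hr))
          fun r hr r' hr' h => Nat.ext_div_mod h (hmod r hr r' hr')
    _ = g := card_range g

theorem card_filter_coprime_dvd_w_le (hd : d ≠ 0) {s : ℕ} (hs : 0 < s) (t : ℕ) :
    #{r ∈ range s | r.Coprime s ∧ (s : ℤ) ∣ w d (t : ℤ) ((r : ℕ) : ℤ)} ≤
      d * rootCount (wOne d) s := by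
  have : NeZero s := ⟨hs.ne'⟩
  set A := {r ∈ range s | r.Coprime s ∧ (s : ℤ) ∣ w d (t : ℤ) ((r : ℕ) : ℤ)}
  rcases A.eq_empty_or_nonempty with hA | ⟨r₀, hr₀⟩
  · simp [hA]
  have hr₀ := (mem_filter.mp hr₀).2
  have hg : s.gcd t ≤ d := Nat.le_of_dvd (Nat.pos_of_ne_zero hd) (gcd_dvd_of_dvd_w hr₀.1 hr₀.2)
  have hmaps : ∀ r ∈ A, ((r : ZMod s)⁻¹ * t).val ∈
      {u ∈ range s | (s : ℤ) ∣ (wOne d).eval ((u : ℕ) : ℤ)} := by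
    intro r hr
    have hr := (mem_filter.mp hr).2
    exact mem_filter.mpr ⟨mem_range.mpr (ZMod.val_lt _), dvd_eval_of_dvd_w hr.1 hr.2⟩
  have hfiber : ∀ u, #{r ∈ A | (((r : ℕ) : ZMod s)⁻¹ * t).val = u} ≤ s.gcd t := by
    intro u
    refine card_le_of_modEq (m := s / s.gcd t) (fun r hr => ?_) fun r hr r' hr' => ?_
    · rw [Nat.div_mul_cancel (Nat.gcd_dvd_left s t)]
      exact mem_range.mp (mem_filter.mp (mem_filter.mp hr).1).1
    · simp only [A, mem_filter] at hr hr'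
      exact modEq_of_inv_mul_eq hs hr.1.2.1 hr'.1.2.1
        (ZMod.val_injective s (hr.2.trans hr'.2.symm))
  calc #A ≤ s.gcd t * rootCount (wOne d) s :=
        card_le_mul_card_image_of_maps_to hmaps _ fun u _ => hfiber u
    _ ≤ d * rootCount (wOne d) s := Nat.mul_le_mul_right _ hg

theorem card_filter_Icc_le_card_filter_range_mul {P Q : ℕ → Prop} [DecidablePred P]
    [DecidablePred Q] {s : ℕ} (hs : 0 < s) (M : ℕ) (hPQ : ∀ z, Q z → P (z % s)) :
    #{z ∈ Icc 1 M | Q z} ≤ #{r ∈ range s | P r} * (M / s + 1) := by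
  rw [← card_range (M / s + 1), ← card_product]
  refine card_le_card_of_injOn (fun z => (z % s, z / s)) (fun z hz => ?_)
    fun z _ z' _ h => Nat.ext_div_mod (Prod.ext_iff.mp h).2 (Prod.ext_iff.mp h).1
  simp only [coe_filter, mem_Icc, Set.mem_ofPred_eq] at hz
  simp only [coe_product, coe_filter, coe_range, mem_range, Set.mem_prod, Set.mem_Iio,
    Set.mem_ofPred_eq]
  exact ⟨⟨Nat.mod_lt z hs, hPQ z hz.2⟩, Nat.lt_succ_of_le (Nat.div_le_div_right hz.1.2)⟩

theorem card_filter_Icc_dvd_w_le (hd : d ≠ 0) {s : ℕ} (hs : 0 < s) (t M : ℕ) :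
    #{z ∈ Icc 1 M | Nat.gcd z t = 1 ∧ (s : ℤ) ∣ w d (t : ℤ) ((z : ℕ) : ℤ)} ≤
      d * rootCount (wOne d) s * (M / s + 1) := by
  refine (card_filter_Icc_le_card_filter_range_mul hs M fun z hz => ?_).trans
    (Nat.mul_le_mul_right _ (card_filter_coprime_dvd_w_le hd hs t))
  have hzs := coprime_of_dvd_w hd hz.1 hz.2
  refine ⟨(ZMod.coprime_mod_iff_coprime z s).mpr hzs, ?_⟩
  rw [dvd_w_iff] at hz ⊢
  simpa using hz.2

theorem monic_wOne (hd : d ≠ 0) : (wOne d).Monic := by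
  have h := (monic_X_add_C (1 : ℤ)).geom_sum (by rw [natDegree_X_add_C]; exact one_pos) hd
  simp only [wOne, w, one_pow, mul_one]
  simpa [add_comm] using h

theorem exists_bezout_wOne (hd : d ≠ 0) :
    ∃ A B : ℤ[X], A * wOne d + B * derivative (wOne d) = C (d : ℤ) := by
  have hmul : wOne d * X = (1 + X : ℤ[X]) ^ d - 1 := by
    simpa [wOne] using w_mul_self d (X : ℤ[X]) 1
  have hderiv : derivative (wOne d) * X + wOne d = (d : ℤ[X]) * (1 + X) ^ (d - 1) := by
    simpa [derivative_mul, derivative_pow] using congrArg derivative hmul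
  have hpow : (1 + X : ℤ[X]) ^ d = (1 + X) ^ (d - 1) * (1 + X) := by
    rw [← pow_succ, Nat.sub_add_cancel (Nat.one_le_iff_ne_zero.mpr hd)]
  refine ⟨1 + X - (d : ℤ[X]) * X, X + X ^ 2, ?_⟩
  rw [eq_intCast, Int.cast_natCast]
  linear_combination (-(d : ℤ[X])) * hmul + (1 + X) * hderiv + (-(d : ℤ[X])) * hpow

theorem rpow_inv_mul_div_add_one_le {n : ℕ} (hn : n ≠ 0) {c s X : ℝ} (hc : 1 ≤ c) (hs : 1 ≤ s)
    (hX : 0 ≤ X) (hsX : s ≤ c * X ^ n) : s ^ (n⁻¹ : ℝ) * (X / s + 1) ≤ (1 + c) * X := by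
  have hn1 : (n⁻¹ : ℝ) ≤ 1 :=
    inv_le_one_of_one_le₀ (by exact_mod_cast Nat.one_le_iff_ne_zero.mpr hn)
  have hss : s ^ (n⁻¹ : ℝ) ≤ s := by simpa using Real.rpow_le_rpow_of_exponent_le hs hn1
  have hcc : c ^ (n⁻¹ : ℝ) ≤ c := by simpa using Real.rpow_le_rpow_of_exponent_le hc hn1
  have hsc : s ^ (n⁻¹ : ℝ) ≤ c * X :=
    calc s ^ (n⁻¹ : ℝ) ≤ (c * X ^ n) ^ (n⁻¹ : ℝ) :=
          Real.rpow_le_rpow (by linarith) hsX (by positivity)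
      _ = c ^ (n⁻¹ : ℝ) * X := by
          rw [Real.mul_rpow (by linarith) (by positivity), Real.pow_rpow_inv_natCast hX hn]
      _ ≤ c * X := by gcongr
  calc s ^ (n⁻¹ : ℝ) * (X / s + 1) = s ^ (n⁻¹ : ℝ) / s * X + s ^ (n⁻¹ : ℝ) := by ring
    _ ≤ 1 * X + c * X := by
        gcongr
        exact (div_le_one (by linarith)).mpr hss
    _ = (1 + c) * X := by ring

theorem rpow_mul_card_filter_le (hd : 2 ≤ d) {Δ c : ℝ} (hc : 0 ≤ c)
    (hroot : ∀ s : ℕ, s ≠ 0 →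
      (rootCount (wOne d) s : ℝ) ≤ c * (s : ℝ) ^ (((d - 1 : ℕ) : ℝ)⁻¹ - Δ))
    {s t : ℕ} (hs : 0 < s) (ht : 0 < t) {x : ℝ} (hx : 1 ≤ x)
    (hsx : (s : ℝ) ≤ d * x ^ (d - 1)) :
    (s : ℝ) ^ Δ * #{z ∈ Icc 1 ⌊x⌋₊ | Nat.gcd z t = 1 ∧
        (s : ℤ) ∣ (((z + t : ℕ) : ℤ) ^ d - (z : ℤ) ^ d) / (t : ℤ)} ≤ d * c * (1 + d) * x := by
  simp_rw [sub_pow_div_eq_w ht]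
  have hs1 : (1 : ℝ) ≤ s := by exact_mod_cast hs
  have hcount :
      (#{z ∈ Icc 1 ⌊x⌋₊ | Nat.gcd z t = 1 ∧ (s : ℤ) ∣ w d (t : ℤ) ((z : ℕ) : ℤ)} : ℝ) ≤
      d * (c * (s : ℝ) ^ (((d - 1 : ℕ) : ℝ)⁻¹ - Δ)) * (x / s + 1) := by
    have hfloor : ((⌊x⌋₊ / s : ℕ) : ℝ) ≤ x / s :=
      Nat.cast_div_le.trans (by gcongr; exact Nat.floor_le (by linarith))
    calc _ ≤ ((d * rootCount (wOne d) s * (⌊x⌋₊ / s + 1) : ℕ) : ℝ) := by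
          exact_mod_cast card_filter_Icc_dvd_w_le (by omega) hs t _
      _ ≤ _ := by
          push_cast
          exact mul_le_mul (mul_le_mul_of_nonneg_left (hroot s hs.ne') (by positivity))
            (by linarith) (by positivity) (by positivity)
  calc _ ≤ (s : ℝ) ^ Δ * (d * (c * (s : ℝ) ^ (((d - 1 : ℕ) : ℝ)⁻¹ - Δ)) * (x / s + 1)) := by
        gcongr
    _ = d * c * ((s : ℝ) ^ (((d - 1 : ℕ) : ℝ)⁻¹) * (x / s + 1)) := by
        rw [Real.rpow_sub (by linarith)]
        field_simp
    _ ≤ d * c * ((1 + d) * x) := by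
        refine mul_le_mul_of_nonneg_left (rpow_inv_mul_div_add_one_le (by omega) ?_ hs1
          (by linarith) hsx) (by positivity)
        exact_mod_cast (by omega : 1 ≤ d)
    _ = d * c * (1 + d) * x := by ring

end DivisorCongruenceCount

open DivisorCongruenceCount

theorem divisor_congruence_count_bound_general (d : ℕ) (Δ : ℝ) (hΔ0 : 0 < Δ)
    (hΔ : Δ < 1 / ((d : ℝ) - 1)) (ε : ℝ) (hε : 0 < ε) :
    ∃ C : ℝ, 0 < C ∧ ∀ (q t : ℕ), 0 < q → 0 < t → ∀ X : ℝ, 2 ≤ X →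
      ∑ s ∈ q.divisors.filter (fun s : ℕ => (s : ℝ) ≤ d * X ^ (d - 1)),
        (s : ℝ) ^ Δ *
          ((Finset.Icc 1 ⌊X⌋₊).filter (fun z : ℕ =>
            Nat.gcd z t = 1 ∧ (s : ℤ) ∣ (((z + t : ℕ) : ℤ) ^ d - (z : ℤ) ^ d) / (t : ℤ))).card
        ≤ C * X * (q : ℝ) ^ ε := by
  have hd : 2 ≤ d := by
    have : (1 : ℝ) < d := by linarith [one_div_pos.mp (hΔ0.trans hΔ)]
    exact_mod_cast this
  rw [one_div, ← Nat.cast_pred (by omega)] at hΔ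
  obtain ⟨A, B, hb⟩ := exists_bezout_wOne (d := d) (by omega)
  obtain ⟨c₁, hc₁, hroot⟩ := exists_rootCount_le_rpow (monic_wOne (by omega))
    (by exact_mod_cast (by omega : d ≠ 0)) hb (sub_pos.mpr hΔ)
  obtain ⟨c₂, hc₂, hτ⟩ := exists_card_divisors_le_rpow hε
  refine ⟨d * c₁ * (1 + d) * c₂, by positivity, fun q t hq ht X hX => ?_⟩
  calc _ ≤ ∑ s ∈ q.divisors.filter (fun s : ℕ => (s : ℝ) ≤ d * X ^ (d - 1)),
          d * c₁ * (1 + d) * X :=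
        sum_le_sum fun s hs => by
          obtain ⟨⟨hsq, -⟩, hsX⟩ := by simpa only [mem_filter, Nat.mem_divisors] using hs
          exact rpow_mul_card_filter_le hd hc₁.le hroot (Nat.pos_of_dvd_of_pos hsq hq) ht
            (by linarith) hsX
    _ ≤ #q.divisors * (d * c₁ * (1 + d) * X) := by
        rw [sum_const, nsmul_eq_mul]
        gcongr
        exact filter_subset _ _
    _ ≤ c₂ * (q : ℝ) ^ ε * (d * c₁ * (1 + d) * X) := by gcongr; exact hτ q hq.ne'
    _ = d * c₁ * (1 + d) * c₂ * X * (q : ℝ) ^ ε := by ring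

/-- Divisor-weighted congruence count: let `0 < Δ < 1/(d−1)`, `w_t(z) = ((z+t)^d − z^d)/t`.
For `X ≥ 2`, `Σ_{s ∣ q, s ≤ dX^{d−1}} s^Δ · #{1 ≤ z ≤ X : gcd(z,t)=1, s ∣ w_t(z)}`
is `O(X q^ε)`, the constant depending only on `d, Δ, ε`. -/
theorem divisor_congruence_count_bound (d : ℕ) (hd : 2 ≤ d) (Δ : ℝ) (hΔ0 : 0 < Δ)
    (hΔ : Δ < 1 / ((d : ℝ) - 1)) (ε : ℝ) (hε : 0 < ε) :
    ∃ C : ℝ, 0 < C ∧ ∀ (q t : ℕ), 0 < q → 0 < t → ∀ X : ℝ, 2 ≤ X →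
      ∑ s ∈ q.divisors.filter (fun s : ℕ => (s : ℝ) ≤ d * X ^ (d - 1)),
        (s : ℝ) ^ Δ *
          ((Finset.Icc 1 ⌊X⌋₊).filter (fun z : ℕ =>
            Nat.gcd z t = 1 ∧ (s : ℤ) ∣ (((z + t : ℕ) : ℤ) ^ d - (z : ℤ) ^ d) / (t : ℤ))).card
        ≤ C * X * (q : ℝ) ^ ε :=
  divisor_congruence_count_bound_general d Δ hΔ0 hΔ ε hε
end
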